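/- Suppose the variance of the posterior μ_{t,z} is bounded by a constant M uniformly over (t,z) ∈ [0,t₀] × ℝ for some t₀ ∈ [0,1). Then z ↦ h(t,z) is Lipschitz continuous with constant M/(1-t₀), uniformly in t ∈ [0,t₀]. -/

import Mathlib

/-!
Differentiating under the integral sign, `∂_z ∫ u^k w = (∫ u^(k+1) w) / (1 - t)`, and the quotient
rule turns this into `∂_z h(t, z) = Var(μ_{t,z}) / (1 - t)`. This derivative is nonnegative by
Cauchy–Schwarz and at most `M / (1 - t₀)` for `t ≤ t₀`, so the mean value theorem concludes.
-/

open Real Set MeasureTheory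

/-- The likelihood weight for the pinning point `u`, given `Z_t = z` (with `Z_0 = 0`). -/
noncomputable def w (t z u : ℝ) : ℝ :=
  Real.exp (u * z / (1 - t) - t * u ^ 2 / (2 * (1 - t)))

/-- The posterior distribution `μ_{t,z}` of the pinning point. -/
noncomputable def post (μ : Measure ℝ) (t z : ℝ) : Measure ℝ :=
  μ.withDensity (fun u => ENNReal.ofReal (w t z u / ∫ u, w t z u ∂μ))

/-- The posterior mean `h(t,z)` of the pinning point. -/
noncomputable def h (μ : Measure ℝ) (t z : ℝ) : ℝ :=
  (∫ u, u * w t z u ∂μ) / ∫ u, w t z u ∂μ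

/-- The variance of the posterior distribution `μ_{t,z}`. -/
noncomputable def postVar (μ : Measure ℝ) (t z : ℝ) : ℝ :=
  (∫ u, u ^ 2 ∂(post μ t z)) - (∫ u, u ∂(post μ t z)) ^ 2

lemma w_pos (t z u : ℝ) : 0 < w t z u := exp_pos _

lemma continuous_w (t z : ℝ) : Continuous (w t z) := by
  unfold w; fun_prop

lemma hasDerivAt_w (t u z : ℝ) :
    HasDerivAt (fun z => w t z u) (u / (1 - t) * w t z u) z := by
  have hexponent : HasDerivAt (fun z => u * z / (1 - t) - t * u ^ 2 / (2 * (1 - t)))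
      (u / (1 - t)) z := by
    simpa using (((hasDerivAt_id z).const_mul u).div_const (1 - t)).sub_const
      (t * u ^ 2 / (2 * (1 - t)))
  simpa [w, mul_comm] using hexponent.exp

/-- The exponent is affine in `x`. -/
lemma w_le_add_of_mem_Icc {t u a b x : ℝ} (hx : x ∈ Icc a b) :
    w t x u ≤ w t a u + w t b u := by
  have affine : ∀ z, u * z / (1 - t) - t * u ^ 2 / (2 * (1 - t))
      = z * (u / (1 - t)) - t * u ^ 2 / (2 * (1 - t)) := fun z => by ring
  rcases le_total 0 (u / (1 - t)) with hslope | hslope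
  · have : w t x u ≤ w t b u := by
      simp only [w, affine]
      gcongr
      exact hx.2
    linarith [w_pos t a u]
  · have : w t x u ≤ w t a u := by
      simp only [w, affine, exp_le_exp, sub_le_sub_iff_right]
      exact mul_le_mul_of_nonpos_right hx.1 hslope
    linarith [w_pos t b u]

noncomputable def wMoment (μ : Measure ℝ) (t : ℝ) (k : ℕ) (z : ℝ) : ℝ :=
  ∫ u, u ^ k * w t z u ∂μ

lemma wMoment_zero_pos (μ : Measure ℝ) [NeZero μ] {t z : ℝ}
    (hint : Integrable (fun u => u ^ 0 * w t z u) μ) : 0 < wMoment μ t 0 z := by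
  simp only [wMoment, pow_zero, one_mul] at hint ⊢
  exact integral_exp_pos hint

lemma hasDerivAt_wMoment {μ : Measure ℝ} {t : ℝ} {k : ℕ}
    (hk : ∀ z, Integrable (fun u => u ^ k * w t z u) μ)
    (hk₁ : ∀ z, Integrable (fun u => u ^ (k + 1) * w t z u) μ) (z : ℝ) :
    HasDerivAt (wMoment μ t k) (wMoment μ t (k + 1) z / (1 - t)) z := by
  have hdominated := hasDerivAt_integral_of_dominated_loc_of_deriv_le (μ := μ) (x₀ := z)
    (F := fun x u => u ^ k * w t x u)
    (F' := fun x u => u ^ (k + 1) * w t x u / (1 - t))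
    (bound := fun u => ‖u ^ (k + 1) * w t (z - 1) u / (1 - t)‖
      + ‖u ^ (k + 1) * w t (z + 1) u / (1 - t)‖)
    (Metric.ball_mem_nhds z one_pos) (.of_forall fun x => (hk x).aestronglyMeasurable) (hk z)
    ((hk₁ z).div_const _).aestronglyMeasurable (.of_forall fun u x hx => ?_)
    (((hk₁ (z - 1)).div_const _).norm.add ((hk₁ (z + 1)).div_const _).norm)
    (.of_forall fun u x _ => ?_)
  · have hderiv := hdominated.2
    rwa [integral_div] at hderiv
  · have hx' : x ∈ Icc (z - 1) (z + 1) := Ioo_subset_Icc_self (Real.ball_eq_Ioo z 1 ▸ hx)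
    simp only [norm_div, norm_mul, Real.norm_of_nonneg (w_pos _ _ u).le, ← add_div, ← mul_add]
    gcongr
    exact w_le_add_of_mem_Icc hx'
  · exact ((hasDerivAt_w t u x).const_mul (u ^ k)).congr_deriv (by ring)

lemma integral_pow_post (μ : Measure ℝ) (t z : ℝ) (k : ℕ) :
    ∫ u, u ^ k ∂(post μ t z) = wMoment μ t k z / wMoment μ t 0 z := by
  have hnorm_nonneg : 0 ≤ ∫ u, w t z u ∂μ := integral_nonneg fun u => (w_pos t z u).le
  rw [post, integral_withDensity_eq_integral_toReal_smul
    ((continuous_w t z).measurable.div_const _).ennreal_ofReal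
    (.of_forall fun _ => ENNReal.ofReal_lt_top)]
  simp only [smul_eq_mul, ENNReal.toReal_ofReal (div_nonneg (w_pos t z _).le hnorm_nonneg)]
  simp only [wMoment, pow_zero, one_mul, ← integral_div]
  congr 1 with u
  ring

lemma postVar_eq (μ : Measure ℝ) (t z : ℝ) :
    postVar μ t z = wMoment μ t 2 z / wMoment μ t 0 z
      - (wMoment μ t 1 z / wMoment μ t 0 z) ^ 2 := by
  have hmean := integral_pow_post μ t z 1
  simp only [pow_one] at hmean
  rw [postVar, integral_pow_post, hmean]

/-- Cauchy–Schwarz: `s ↦ ∫ (u - s)^2 w` is a nonnegative quadratic, so its discriminant is `≤ 0`. -/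
lemma sq_wMoment_one_le {μ : Measure ℝ} {t z : ℝ}
    (hint : ∀ k ≤ 2, Integrable (fun u => u ^ k * w t z u) μ) :
    wMoment μ t 1 z ^ 2 ≤ wMoment μ t 0 z * wMoment μ t 2 z := by
  have hquad : ∀ s, 0 ≤ wMoment μ t 0 z * (s * s) + (-2 * wMoment μ t 1 z) * s
      + wMoment μ t 2 z := by
    intro s
    have i₀ := (hint 0 (by norm_num)).const_mul (s ^ 2)
    have i₁ := (hint 1 (by norm_num)).const_mul (-2 * s)
    have hexpand : ∫ u, (u - s) ^ 2 * w t z u ∂μ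
        = wMoment μ t 0 z * (s * s) + (-2 * wMoment μ t 1 z) * s + wMoment μ t 2 z := by
      have hpoint : (fun u => (u - s) ^ 2 * w t z u) = fun u =>
          (s ^ 2 * (u ^ 0 * w t z u) + -2 * s * (u ^ 1 * w t z u)) + u ^ 2 * w t z u := by
        ext u; ring
      have i₀₁ : Integrable (fun u => s ^ 2 * (u ^ 0 * w t z u) + -2 * s * (u ^ 1 * w t z u)) μ :=
        i₀.add i₁
      rw [hpoint, integral_add i₀₁ (hint 2 le_rfl), integral_add i₀ i₁,
        integral_const_mul, integral_const_mul]
      simp only [wMoment]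
      ring
    rw [← hexpand]
    exact integral_nonneg fun u => mul_nonneg (sq_nonneg _) (w_pos t z u).le
  have := discrim_le_zero hquad
  rw [discrim] at this
  nlinarith

lemma postVar_nonneg {μ : Measure ℝ} {t z : ℝ}
    (hint : ∀ k ≤ 2, Integrable (fun u => u ^ k * w t z u) μ) : 0 ≤ postVar μ t z := by
  have hcs := sq_wMoment_one_le hint
  rw [postVar_eq]
  rcases eq_or_ne (wMoment μ t 0 z) 0 with h0 | h0
  · simp [h0]
  · have hcommon : wMoment μ t 2 z / wMoment μ t 0 z - (wMoment μ t 1 z / wMoment μ t 0 z) ^ 2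
        = (wMoment μ t 0 z * wMoment μ t 2 z - wMoment μ t 1 z ^ 2) / wMoment μ t 0 z ^ 2 := by
      field_simp
    rw [hcommon]
    exact div_nonneg (sub_nonneg.2 hcs) (sq_nonneg _)

lemma hasDerivAt_h {μ : Measure ℝ} [NeZero μ] {t : ℝ}
    (hint : ∀ z, ∀ k ≤ 2, Integrable (fun u => u ^ k * w t z u) μ) (z : ℝ) :
    HasDerivAt (h μ t) (postVar μ t z / (1 - t)) z := by
  have hG₀ := (wMoment_zero_pos μ (hint z 0 (by norm_num))).ne'
  have hG₀' := hasDerivAt_wMoment (k := 0) (fun z => hint z 0 (by norm_num))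
    (fun z => hint z 1 (by norm_num)) z
  have hG₁' := hasDerivAt_wMoment (k := 1) (fun z => hint z 1 (by norm_num))
    (fun z => hint z 2 (by norm_num)) z
  have hquot : h μ t = fun z => wMoment μ t 1 z / wMoment μ t 0 z := by
    funext z
    simp [h, wMoment]
  rw [hquot, postVar_eq]
  refine (hG₁'.div hG₀' hG₀).congr_deriv ?_
  field_simp

theorem stmt6 (μ : Measure ℝ) [IsProbabilityMeasure μ] (t₀ M : ℝ)
    (ht₀ : t₀ ∈ Set.Ico (0 : ℝ) 1)
    (hint : ∀ t ∈ Set.Icc (0 : ℝ) t₀, ∀ z : ℝ, ∀ k : ℕ, k ≤ 2 →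
      Integrable (fun u => u ^ k * w t z u) μ)
    (hvar : ∀ t ∈ Set.Icc (0 : ℝ) t₀, ∀ z : ℝ, postVar μ t z ≤ M) :
    ∀ t ∈ Set.Icc (0 : ℝ) t₀, ∀ z₁ z₂ : ℝ,
      |h μ t z₁ - h μ t z₂| ≤ M / (1 - t₀) * |z₁ - z₂| := by
  intro t ht z₁ z₂
  have h1t : 0 < 1 - t := by linarith [ht.2, ht₀.2]
  have hM : 0 ≤ M := (postVar_nonneg (hint t ht 0)).trans (hvar t ht 0)
  have hderiv_le : ∀ z, ‖postVar μ t z / (1 - t)‖ ≤ M / (1 - t₀) := fun z => by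
    rw [Real.norm_of_nonneg (div_nonneg (postVar_nonneg (hint t ht z)) h1t.le)]
    calc postVar μ t z / (1 - t) ≤ M / (1 - t) := by gcongr; exact hvar t ht z
      _ ≤ M / (1 - t₀) := by gcongr <;> linarith [ht.2, ht₀.2]
  simpa [Real.norm_eq_abs] using convex_univ.norm_image_sub_le_of_norm_hasDerivWithin_le
    (fun x _ => (hasDerivAt_h (hint t ht) x).hasDerivWithinAt) (fun x _ => hderiv_le x)
    (mem_univ z₂) (mem_univ z₁)
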